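/- arXiv:2009.05253 — 4 statements merged into one kernel-verified Lean document; each statement's English description precedes it below -/
import Mathlib

section
/- Let Δ be an n×n real matrix and h = [[h11, h12],[h12, h22]] a symmetric 2×2 real matrix with h11 < 0. If for every positive semidefinite n×n matrix Λ the inequality [Δᵀ; I]ᵀ (h ⊗ Λ) [Δᵀ; I] ⪰ 0 holds (i.e., h11·ΔΛΔᵀ + h12·(ΔΛ + ΛΔᵀ) + h22·Λ ⪰ 0), then Δ is diagonal, i.e., its off-diagonal entries all vanish. -/
/-!
Evaluate the multiplier inequality for `Λ = e_k e_kᵀ` at the vector `e_i`. For rank-one `Λ = v vᵀ`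
the quadratic form at `x` is `h11 a² + 2 h12 a b + h22 b²` with `a = xᵀ Δ v`, `b = xᵀ v`; for
`i ≠ k` this is `h11 (Δ i k)²`, which is nonnegative with `h11 < 0` only if `Δ i k = 0`.
-/

open Matrix

section

variable {R ι : Type*} [CommRing R] [Fintype ι]

theorem Matrix.dotProduct_vecMulVec_mulVec (u w x : ι → R) :
    x ⬝ᵥ (vecMulVec u w *ᵥ x) = (x ⬝ᵥ u) * (w ⬝ᵥ x) := by
  rw [vecMulVec_mulVec, op_smul_eq_smul, dotProduct_smul, smul_eq_mul, mul_comm]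

theorem Matrix.mul_vecMulVec_mul_transpose (Δ : Matrix ι ι R) (v : ι → R) :
    Δ * vecMulVec v v * Δᵀ = vecMulVec (Δ *ᵥ v) (Δ *ᵥ v) := by
  rw [mul_vecMulVec, vecMulVec_mul, vecMul_transpose]

theorem dotProduct_multiplier_vecMulVec_mulVec (Δ : Matrix ι ι R) (h11 h12 h22 : R)
    (v x : ι → R) :
    x ⬝ᵥ ((h11 • (Δ * vecMulVec v v * Δᵀ) + h12 • (Δ * vecMulVec v v + vecMulVec v v * Δᵀ)
      + h22 • vecMulVec v v) *ᵥ x) =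
      h11 * (x ⬝ᵥ Δ *ᵥ v) ^ 2 + 2 * h12 * (x ⬝ᵥ Δ *ᵥ v) * (x ⬝ᵥ v) + h22 * (x ⬝ᵥ v) ^ 2 := by
  rw [mul_vecMulVec_mul_transpose, mul_vecMulVec, vecMulVec_mul, vecMul_transpose]
  simp only [add_mulVec, smul_mulVec, dotProduct_add, dotProduct_smul, smul_eq_mul,
    dotProduct_vecMulVec_mulVec, dotProduct_comm _ x]
  ring

end

/-- If for every PSD Λ the quadratic multiplier inequality
`h11·ΔΛΔᵀ + h12·(ΔΛ + ΛΔᵀ) + h22·Λ ⪰ 0` holds with `h11 < 0`,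
then `Δ` is diagonal. -/
theorem stmt_0 (n : ℕ) (Δ : Matrix (Fin n) (Fin n) ℝ)
    (h11 h12 h22 : ℝ) (hneg : h11 < 0)
    (hmult : ∀ Λ : Matrix (Fin n) (Fin n) ℝ, Λ.PosSemidef →
      (h11 • (Δ * Λ * Δᵀ) + h12 • (Δ * Λ + Λ * Δᵀ) + h22 • Λ).PosSemidef) :
    ∀ i k : Fin n, i ≠ k → Δ i k = 0 := by
  intro i k hik
  have hform := (hmult _ (posSemidef_vecMulVec_self_star (Pi.single k 1))).dotProduct_mulVec_nonneg
    (Pi.single i 1)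
  simp only [star_trivial] at hform
  rw [dotProduct_multiplier_vecMulVec_mulVec, single_one_dotProduct,
    single_one_dotProduct, mulVec_single_one, Pi.single_eq_of_ne hik, col_apply] at hform
  have hsq : 0 ≤ h11 * Δ i k ^ 2 := by simpa using hform
  exact pow_eq_zero_iff two_ne_zero |>.mp
    (le_antisymm (nonpos_of_mul_nonneg_right hsq hneg) (sq_nonneg _))
end

section
/- Let Δ be an n×n real matrix and h11 < 0, h12, h22 real numbers. If for every positive semidefinite n×n matrix Λ the inequality h11·ΔΛΔᵀ + h12·(ΔΛ + ΛΔᵀ) + h22·Λ ⪰ 0 holds, then Δ = δ·I for some real scalar δ. -/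
/-!
Testing the constraint with the rank-one multiplier `Λ = x xᵀ` and evaluating the quadratic form
at `v` gives `h11 (vᵀΔx)² + 2 h12 (vᵀΔx)(xᵀv) + h22 (xᵀv)² ≥ 0`. For `v ⊥ x` only the first term
survives, and `h11 < 0` forces `vᵀΔx = 0`. Hence `Δx ∈ (x⊥)⊥ = span x` for every `x`, and a linear
map for which every vector is an eigenvector is a scalar multiple of the identity.
-/

open Matrix

namespace Matrix

variable {n R : Type*} [Fintype n]

/-- `[Δᵀ; I]ᵀ (h ⊗ Λ) [Δᵀ; I]` for `h = [[a, b], [b, c]]`. -/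
def quadMultiplier [CommRing R] (Δ : Matrix n n R) (a b c : R) (Λ : Matrix n n R) :
    Matrix n n R :=
  a • (Δ * Λ * Δᵀ) + b • (Δ * Λ + Λ * Δᵀ) + c • Λ

theorem dotProduct_mul_vecMulVec_mul_mulVec [CommSemiring R] (A B : Matrix n n R)
    (x y v w : n → R) :
    v ⬝ᵥ (A * vecMulVec x y * B) *ᵥ w = (v ⬝ᵥ A *ᵥ x) * (y ⬝ᵥ B *ᵥ w) := by
  rw [mul_vecMulVec, vecMulVec_mul, vecMulVec_mulVec, dotProduct_smul, dotProduct_mulVec y,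
    MulOpposite.smul_eq_mul_unop, MulOpposite.unop_op, mul_comm]

theorem dotProduct_quadMultiplier_vecMulVec_self_mulVec [CommRing R]
    (Δ : Matrix n n R) (a b c : R) (x v : n → R) :
    v ⬝ᵥ quadMultiplier Δ a b c (vecMulVec x x) *ᵥ v =
      a * (v ⬝ᵥ Δ *ᵥ x) ^ 2 + 2 * b * (v ⬝ᵥ Δ *ᵥ x) * (x ⬝ᵥ v) + c * (x ⬝ᵥ v) ^ 2 := by
  classical
  have h := dotProduct_mul_vecMulVec_mul_mulVec (x := x) (y := x) (v := v) (w := v)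
  have h₁ := h Δ 1
  have h₂ := h 1 Δᵀ
  have h₃ := h 1 1
  simp only [Matrix.mul_one, Matrix.one_mul, one_mulVec, dotProduct_transpose_mulVec] at h₁ h₂ h₃
  simp only [quadMultiplier, add_mulVec, smul_mulVec, dotProduct_add, dotProduct_smul,
    smul_eq_mul, h Δ Δᵀ, h₁, h₂, h₃, dotProduct_transpose_mulVec, dotProduct_comm v x]
  ring

theorem dotProduct_mulVec_eq_zero_of_posSemidef_quadMultiplier {Δ : Matrix n n ℝ} {a b c : ℝ}
    (ha : a < 0) {x v : n → ℝ} (hM : (quadMultiplier Δ a b c (vecMulVec x x)).PosSemidef)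
    (hxv : x ⬝ᵥ v = 0) :
    v ⬝ᵥ Δ *ᵥ x = 0 := by
  have hQ := hM.dotProduct_mulVec_nonneg v
  rw [star_trivial, dotProduct_quadMultiplier_vecMulVec_self_mulVec, hxv] at hQ
  simp only [mul_zero, zero_pow two_ne_zero, add_zero] at hQ
  exact (sq_nonpos_iff _).mp (nonpos_of_mul_nonneg_right hQ ha)

theorem exists_eq_smul_of_forall_dotProduct_eq_zero [Field R] [LinearOrder R]
    [IsStrictOrderedRing R] {x y : n → R} (h : ∀ v, x ⬝ᵥ v = 0 → v ⬝ᵥ y = 0) :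
    ∃ c : R, y = c • x := by
  by_cases hx : x = 0
  · exact ⟨0, by simpa [dotProduct_self_eq_zero] using h y (by simp [hx])⟩
  set c := (x ⬝ᵥ y) / (x ⬝ᵥ x)
  have hxx : x ⬝ᵥ x ≠ 0 := by rwa [Ne, dotProduct_self_eq_zero]
  have hxr : x ⬝ᵥ (y - c • x) = 0 := by
    rw [dotProduct_sub, dotProduct_smul, smul_eq_mul, div_mul_cancel₀ _ hxx, sub_self]
  refine ⟨c, sub_eq_zero.mp (dotProduct_self_eq_zero.mp ?_)⟩
  rw [dotProduct_sub, h _ hxr, dotProduct_smul, dotProduct_comm, hxr, smul_zero, sub_zero]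

theorem exists_eq_smul_one_of_forall_exists_mulVec_eq_smul [Field R] [DecidableEq n]
    {A : Matrix n n R} (h : ∀ v, ∃ c : R, A *ᵥ v = c • v) :
    ∃ a : R, A = a • 1 := by
  obtain ⟨a, ha⟩ := (toLin' A).exists_eq_smul_id_of_forall_notLinearIndependent fun v hv ↦ by
    obtain ⟨c, hc⟩ := h v
    have := LinearIndependent.pair_iff.mp hv c (-1) (by simp [hc])
    simp at this
  refine ⟨a, ?_⟩
  rw [← LinearMap.toMatrix'_toLin' A, ha]
  simp

end Matrix

/-- If for every PSD Λ the quadratic multiplier inequality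
`h11·ΔΛΔᵀ + h12·(ΔΛ + ΛΔᵀ) + h22·Λ ⪰ 0` holds with `h11 < 0`,
then `Δ = δ·I` for some scalar `δ`. -/
theorem stmt_1 (n : ℕ) (Δ : Matrix (Fin n) (Fin n) ℝ)
    (h11 h12 h22 : ℝ) (hneg : h11 < 0)
    (hmult : ∀ Λ : Matrix (Fin n) (Fin n) ℝ, Λ.PosSemidef →
      (h11 • (Δ * Λ * Δᵀ) + h12 • (Δ * Λ + Λ * Δᵀ) + h22 • Λ).PosSemidef) :
    ∃ δ : ℝ, Δ = δ • (1 : Matrix (Fin n) (Fin n) ℝ) := by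
  have horth (x v : Fin n → ℝ) (hxv : x ⬝ᵥ v = 0) : v ⬝ᵥ Δ *ᵥ x = 0 :=
    dotProduct_mulVec_eq_zero_of_posSemidef_quadMultiplier hneg
      (hmult _ (by simpa using posSemidef_vecMulVec_self_star x)) hxv
  exact exists_eq_smul_one_of_forall_exists_mulVec_eq_smul fun x ↦
    exists_eq_smul_of_forall_dotProduct_eq_zero (horth x)
end

section
/- Let Δ be an n×n real matrix with negative upper-left coefficient constraint: suppose h11 < 0 and for each standard basis vector e_k, the matrix h11·Δe_k e_kᵀΔᵀ + h12·(Δe_k e_kᵀ + e_k e_kᵀΔᵀ) + h22·e_k e_kᵀ is positive semidefinite. Then for all indices i ≠ k, the (i,k) entry of Δ is zero. -/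
open Matrix

theorem Matrix.mul_single_mul_apply {l m n o α : Type*} [Fintype m] [Fintype n]
    [DecidableEq m] [DecidableEq n] [NonUnitalNonAssocSemiring α]
    (A : Matrix l m α) (B : Matrix n o α) (j : m) (k : n) (c : α) (a : l) (b : o) :
    (A * single j k c * B) a b = A a j * c * B k b := by
  simp [mul_apply, single, ite_and]

/-- If `h11 < 0` and for each standard basis vector `e_k` the matrix
`h11·Δe_k e_kᵀΔᵀ + h12·(Δe_k e_kᵀ + e_k e_kᵀΔᵀ) + h22·e_k e_kᵀ` is PSD,
then the off-diagonal entries of `Δ` vanish. -/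
theorem stmt_2 (n : ℕ) (Δ : Matrix (Fin n) (Fin n) ℝ)
    (h11 h12 h22 : ℝ) (hneg : h11 < 0)
    (hmult : ∀ k : Fin n,
      (h11 • (Δ * Matrix.single k k (1 : ℝ) * Δᵀ)
        + h12 • (Δ * Matrix.single k k (1 : ℝ)
            + Matrix.single k k (1 : ℝ) * Δᵀ)
        + h22 • Matrix.single k k (1 : ℝ)).PosSemidef) :
    ∀ i k : Fin n, i ≠ k → Δ i k = 0 := by
  intro i k hik
  -- A PSD matrix has a nonnegative diagonal, and for `i ≠ k` only the `h11` term reaches entry `(i, i)`.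
  have hdiag : 0 ≤ h11 * (Δ i k * Δ i k) := by
    simpa [mul_single_mul_apply, hik, hik.symm]
      using (hmult k).diag_nonneg (i := i)
  exact mul_self_eq_zero.mp <|
    le_antisymm (nonpos_of_mul_nonneg_right hdiag hneg) (mul_self_nonneg _)
end

section
/- Let Q be an n×n negative definite symmetric real matrix, B an n×m real matrix, and T an n×p real matrix. Suppose that for every v ∈ ℝⁿ with Bᵀv = 0 one has vᵀ T Q Tᵀ v ≥ 0. Then Tᵀv = 0 for every v with Bᵀv = 0; consequently the column space of T is contained in the column space of B, i.e., T = B·Δ for some m×p matrix Δ. -/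
/-!
If `Bᵀv = 0` but `w = Tᵀv ≠ 0`, then `vᵀ T Q Tᵀ v = wᵀ Q w < 0`, contradicting the hypothesis.
So `ker Bᵀ ⊆ ker Tᵀ`, hence `Tᵀ` factors through `Bᵀ`, which transposes to `T = B Δ`.
-/

open Matrix

theorem LinearMap.exists_comp_eq_of_ker_le {K V W U : Type*} [Field K] [AddCommGroup V]
    [AddCommGroup W] [AddCommGroup U] [Module K V] [Module K W] [Module K U]
    (g : V →ₗ[K] W) (f : V →ₗ[K] U) (hgf : ker g ≤ ker f) :
    ∃ h : W →ₗ[K] U, h ∘ₗ g = f := by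
  obtain ⟨r, hr⟩ := (ker g).liftQ g le_rfl |>.exists_leftInverse_of_injective
    (Submodule.ker_liftQ_eq_bot _ _ _ le_rfl)
  refine ⟨(ker g).liftQ f hgf ∘ₗ r, LinearMap.ext fun x => ?_⟩
  have hx : r (g x) = Submodule.Quotient.mk x := LinearMap.congr_fun hr (Submodule.Quotient.mk x)
  simp [hx]

theorem Matrix.exists_eq_mul_of_ker_transpose_le {K l m n : Type*} [Field K] [Fintype l]
    [Fintype m] (A : Matrix l m K) (C : Matrix l n K)
    (hAC : ∀ v, Aᵀ *ᵥ v = 0 → Cᵀ *ᵥ v = 0) : ∃ Δ : Matrix m n K, C = A * Δ := by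
  classical
  obtain ⟨h, hh⟩ := (toLin' Aᵀ).exists_comp_eq_of_ker_le (toLin' Cᵀ) fun v hv => hAC v hv
  refine ⟨(LinearMap.toMatrix' h)ᵀ, ?_⟩
  have hCt : LinearMap.toMatrix' h * Aᵀ = Cᵀ := by
    simpa [LinearMap.toMatrix'_comp] using congrArg LinearMap.toMatrix' hh
  rw [← transpose_transpose C, ← hCt, transpose_mul, transpose_transpose]

theorem Matrix.PosDef.dotProduct_mul_mul_conjTranspose_mulVec_pos {n m R : Type*} [Fintype n]
    [Fintype m] [CommRing R] [PartialOrder R] [StarRing R] {A : Matrix n n R} (hA : A.PosDef)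
    (B : Matrix m n R) {x : m → R} (hx : Bᴴ *ᵥ x ≠ 0) : 0 < star x ⬝ᵥ (B * A * Bᴴ) *ᵥ x := by
  simpa only [star_mulVec, conjTranspose_conjTranspose, dotProduct_mulVec, vecMul_vecMul,
    ← mulVec_mulVec] using hA.dotProduct_mulVec_pos hx

/-- If `Q` is negative definite and `vᵀ T Q Tᵀ v ≥ 0` for all `v` with `Bᵀv = 0`,
then `Tᵀv = 0` for all such `v`, and consequently `T = B·Δ` for some `Δ`.
(For `T Q Tᵀ` to be well-defined with `T : n×p`, the matrix `Q` is `p×p`.) -/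
theorem stmt_3 (n m p : ℕ)
    (Q : Matrix (Fin p) (Fin p) ℝ) (B : Matrix (Fin n) (Fin m) ℝ)
    (T : Matrix (Fin n) (Fin p) ℝ)
    (hQ : (-Q).PosDef)
    (h : ∀ v : Fin n → ℝ, Bᵀ.mulVec v = 0 → 0 ≤ v ⬝ᵥ (T * Q * Tᵀ).mulVec v) :
    (∀ v : Fin n → ℝ, Bᵀ.mulVec v = 0 → Tᵀ.mulVec v = 0) ∧
      ∃ Δ : Matrix (Fin m) (Fin p) ℝ, T = B * Δ := by
  have hker : ∀ v : Fin n → ℝ, Bᵀ.mulVec v = 0 → Tᵀ.mulVec v = 0 := by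
    intro v hv
    by_contra hTv
    have hpos := hQ.dotProduct_mul_mul_conjTranspose_mulVec_pos T
      (by rwa [conjTranspose_eq_transpose_of_trivial])
    rw [conjTranspose_eq_transpose_of_trivial, star_trivial, Matrix.mul_neg, Matrix.neg_mul,
      neg_mulVec, dotProduct_neg, neg_pos] at hpos
    exact (h v hv).not_gt hpos
  exact ⟨hker, B.exists_eq_mul_of_ker_transpose_le T hker⟩
end
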